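/- If Γ does not derive ⊥ in the basic primal logic P (without any rule for ⊥), and Γ ⊢ φ in P[⊥_w], then already Γ ⊢ φ in P. -/

import Mathlib

/-- Infons: formulas built from atoms, ⊤, ⊥, conjunction and primal implication. -/
inductive Infon : Type
  | atom : ℕ → Infon
  | top : Infon
  | bot : Infon
  | and : Infon → Infon → Infon
  | imp : Infon → Infon → Infon
deriving DecidableEq

/-- Derivability in the basic primal infon logic P (⊥ is an ordinary atom, no rule for it). -/
inductive DerP : Set Infon → Infon → Prop
  | top (Γ : Set Infon) : DerP Γ .top
  | id (φ : Infon) : DerP {φ} φ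
  | weak {Γ φ} (Δ : Set Infon) : DerP Γ φ → DerP (Γ ∪ Δ) φ
  | cut {Γ φ ψ} : DerP Γ φ → DerP (insert φ Γ) ψ → DerP Γ ψ
  | andI {Γ φ ψ} : DerP Γ φ → DerP Γ ψ → DerP Γ (.and φ ψ)
  | andE1 {Γ φ ψ} : DerP Γ (.and φ ψ) → DerP Γ φ
  | andE2 {Γ φ ψ} : DerP Γ (.and φ ψ) → DerP Γ ψ
  | impI {Γ ψ} (φ : Infon) : DerP Γ ψ → DerP Γ (.imp φ ψ)
  | impE {Γ φ ψ} : DerP Γ φ → DerP Γ (.imp φ ψ) → DerP Γ ψ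

/-- Derivability in P[⊥_w]: P plus the weak ⊥-elimination rule. -/
inductive DerW : Set Infon → Infon → Prop
  | top (Γ : Set Infon) : DerW Γ .top
  | id (φ : Infon) : DerW {φ} φ
  | weak {Γ φ} (Δ : Set Infon) : DerW Γ φ → DerW (Γ ∪ Δ) φ
  | cut {Γ φ ψ} : DerW Γ φ → DerW (insert φ Γ) ψ → DerW Γ ψ
  | andI {Γ φ ψ} : DerW Γ φ → DerW Γ ψ → DerW Γ (.and φ ψ)
  | andE1 {Γ φ ψ} : DerW Γ (.and φ ψ) → DerW Γ φ
  | andE2 {Γ φ ψ} : DerW Γ (.and φ ψ) → DerW Γ ψ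
  | impI {Γ ψ} (φ : Infon) : DerW Γ ψ → DerW Γ (.imp φ ψ)
  | impE {Γ φ ψ} : DerW Γ φ → DerW Γ (.imp φ ψ) → DerW Γ ψ
  | botEw {Γ φ ψ} : DerW Γ .bot → DerW Γ (.imp φ ψ) → DerW Γ ψ

/-- Positive atoms of an infon. -/
def posAt : Infon → Set Infon
  | .and φ ψ => posAt φ ∪ posAt ψ
  | .imp _ ψ => posAt ψ
  | φ => {φ}

/-- Positive atoms of a context. -/
def posCtx (Γ : Set Infon) : Set Infon := ⋃ φ ∈ Γ, posAt φ

/-! Weak ⊥-elimination only fires once ⊥ is derivable from its context, and every other rule of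
P[⊥_w] is a rule of P that also carries a P-derivation of ⊥ from the contexts of its premises to
that of its conclusion (for cut, by cutting it against the P-derivation of the cut formula). -/

theorem DerW.derP_or_derP_bot {Γ : Set Infon} {φ : Infon} (h : DerW Γ φ) :
    DerP Γ φ ∨ DerP Γ .bot := by
  induction h with
  | top Γ => exact .inl (.top Γ)
  | id φ => exact .inl (.id φ)
  | weak Δ _ ih => exact ih.imp (.weak Δ) (.weak Δ)
  | cut _ _ ih₁ ih₂ => exact ih₁.elim (fun h₁ => ih₂.imp h₁.cut h₁.cut) .inr
  | andI _ _ ih₁ ih₂ => exact ih₁.elim (fun h₁ => ih₂.imp_left h₁.andI) .inr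
  | andE1 _ ih => exact ih.imp_left .andE1
  | andE2 _ ih => exact ih.imp_left .andE2
  | impI ψ _ ih => exact ih.imp_left (.impI ψ)
  | impE _ _ ih₁ ih₂ => exact ih₁.elim (fun h₁ => ih₂.imp_left h₁.impE) .inr
  | botEw _ _ ih _ => exact .inr (or_self_iff.mp ih)

/-- If Γ ⊬ ⊥ in P and Γ ⊢ φ in P[⊥_w], then Γ ⊢ φ in P. -/
theorem derP_of_derW_of_not_bot (Γ : Set Infon) (φ : Infon)
    (hnb : ¬ DerP Γ .bot) (h : DerW Γ φ) : DerP Γ φ := by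
  exact h.derP_or_derP_bot.resolve_right hnb
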